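/- Let x ∈ Λ_I ⊂ Λ̄ and a = a_{ij}. Every element of the group U_{a,x} = { u ∈ U_a : ψ_a(u) ≥ f_x(a) } leaves the subspace V_I = span{v_i : i ∈ I} invariant. Moreover, if i and j are not both in I then ρ_I(U_{a,x}) = 1, while if i,j ∈ I and a is induced by the root b of T_I, then ρ_I restricts to a group isomorphism U_{a,x} → U^I_{b,x}. -/

import Mathlib

set_option linter.unusedSectionVars false


open Set Pointwise Topology Filter

namespace CompApp

variable {n : ℕ}

/-- The component `Λ_I`: the quotient of the functions `I → ℝ` by the line of
constants (so `Λ_I = Σ_{i∈I} ℝ η_i^I` with the relation `Σ_{i∈I} η_i^I = 0`). -/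
abbrev Comp (I : Finset (Fin n)) : Type :=
  (↥I → ℝ) ⧸ (Submodule.span ℝ {(1 : ↥I → ℝ)})

/-- quotient map onto a component -/
noncomputable def mkC (I : Finset (Fin n)) : (↥I → ℝ) →ₗ[ℝ] Comp I :=
  Submodule.mkQ _

/-- The apartment `Λ` itself, i.e. the component for `I = {1,…,n}`. -/
abbrev Apt (n : ℕ) : Type := Comp (Finset.univ : Finset (Fin n))

/-- restriction of functions from `{1,…,n}` to `J` -/
def resL (J : Finset (Fin n)) :
    ((↥(Finset.univ : Finset (Fin n)) → ℝ)) →ₗ[ℝ] (↥J → ℝ) :=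
  LinearMap.funLeft ℝ ℝ (fun j => ⟨j.1, Finset.mem_univ _⟩)

/-- The projection `r_J : Λ → Λ_J`, `Σ x_i η_i ↦ Σ_{i∈J} x_i η_i^J`. -/
noncomputable def resQ (J : Finset (Fin n)) : Apt n →ₗ[ℝ] Comp J :=
  Submodule.mapQ _ _ (resL J) (by
    rw [Submodule.span_le]
    intro x hx
    rw [Set.mem_singleton_iff] at hx
    subst hx
    exact Submodule.mem_comap.mpr (Submodule.subset_span rfl))

variable [NeZero n]

/-- The compactified apartment `Λ̄ = ⋃_{∅≠I⊆{1,…,n}} Λ_I` as a set. -/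
def CApt (n : ℕ) : Type := Σ I : {I : Finset (Fin n) // I.Nonempty}, Comp I.1

/-- The embedding `Λ ↪ Λ̄`. -/
def emb (z : Apt n) : CApt n := ⟨⟨Finset.univ, Finset.univ_nonempty⟩, z⟩

/-- The point of the boundary component `Λ_I` inside `Λ̄`. -/
def embC (I : Finset (Fin n)) (hI : I.Nonempty) (y : Comp I) : CApt n := ⟨⟨I, hI⟩, y⟩

/-- The cone `D_I = Σ_{i∉I} ℝ_{≥0}(−η_i) ⊆ Λ`. -/
noncomputable def cone (I : Finset (Fin n)) : Set (Apt n) :=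
  (mkC _) '' {x | (∀ l : ↥(Finset.univ : Finset (Fin n)), (l : Fin n) ∈ I → x l = 0) ∧
    ∀ l : ↥(Finset.univ : Finset (Fin n)), (l : Fin n) ∉ I → x l ≤ 0}

/-- The basic open set `C_U^I = ⋃_{I ⊆ J} r_J(U + D_I) ⊆ Λ̄`. -/
noncomputable def CUI (U : Set (Apt n)) (I : Finset (Fin n)) : Set (CApt n) :=
  {p | I ⊆ p.1.1 ∧ p.2 ∈ resQ p.1.1 '' (U + cone I)}

/-- Boundedness for subsets of the apartment `Λ`. -/
def BoundedA (U : Set (Apt n)) : Prop :=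
  ∃ t : Set (↥(Finset.univ : Finset (Fin n)) → ℝ),
    Bornology.IsBounded t ∧ U ⊆ (mkC _) '' t

/-- The topology of `Λ̄`: generated by the open subsets of `Λ` together with the
sets `C_U^I` for nonempty proper `I` and bounded open `U ⊆ Λ`. -/
noncomputable instance : TopologicalSpace (CApt n) :=
  TopologicalSpace.generateFrom
    ({s | ∃ U : Set (Apt n), IsOpen U ∧ s = emb '' U} ∪
     {s | ∃ (U : Set (Apt n)) (I : Finset (Fin n)), I.Nonempty ∧ I ≠ Finset.univ ∧
        IsOpen U ∧ BoundedA U ∧ s = CUI U I})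

/-- The root `a_{ij} = χ_i − χ_j` as a linear functional on `Λ`. -/
noncomputable def aFun (i j : Fin n) : Apt n →ₗ[ℝ] ℝ :=
  Submodule.liftQ _
    (LinearMap.proj (⟨i, Finset.mem_univ i⟩ : ↥(Finset.univ : Finset (Fin n))) -
      LinearMap.proj ⟨j, Finset.mem_univ j⟩) (by
    rw [Submodule.span_le]
    intro x hx
    rw [Set.mem_singleton_iff] at hx
    subst hx
    simp [LinearMap.mem_ker])

/-- The root `b_{ij}` of the component `Λ_I` (for `i, j ∈ I`). -/
noncomputable def bFun (I : Finset (Fin n)) (i j : ↥I) : Comp I →ₗ[ℝ] ℝ :=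
  Submodule.liftQ _
    (LinearMap.proj (R := ℝ) (φ := fun _ : ↥I => ℝ) i -
      LinearMap.proj (R := ℝ) (φ := fun _ : ↥I => ℝ) j) (by
    rw [Submodule.span_le]
    intro x hx
    rw [Set.mem_singleton_iff] at hx
    subst hx
    simp [LinearMap.mem_ker])

/-- The closure in `Λ̄` of the half-space `{ z ∈ Λ : a_{ij}(z) ≥ s }`. -/
noncomputable def halfCl (i j : Fin n) (s : ℝ) : Set (CApt n) :=
  closure (emb '' {z : Apt n | s ≤ aFun i j z})

/-- `f_Ω(a) = inf{ t : Ω ⊆ closure{ z ∈ Λ : a(z) ≥ −t } } ∈ ℝ ∪ {±∞}`,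
for `a = a_{ij}` (with `inf ∅ = +∞`). -/
noncomputable def fO (Ω : Set (CApt n)) (i j : Fin n) : EReal :=
  sInf {t : EReal | ∃ s : ℝ, t = (s : EReal) ∧ Ω ⊆ halfCl i j (-s)}

/-- The unipotent element `u = 1 + ω·E_{ij}` of the root group `U_{a_{ij}}`
of `GL_n(K)` (mapping `v_l ↦ v_l` for `l ≠ j` and `v_j ↦ v_j + ω v_i`). -/
def elemMat {K : Type*} [Field K] {n : ℕ} (i j : Fin n) (ω : K) :
    Matrix (Fin n) (Fin n) K :=
  1 + ω • Matrix.single i j 1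

section AuxProof

variable {n : ℕ} [NeZero n]

lemma mkC_surjective (I : Finset (Fin n)) : Function.Surjective (mkC I) :=
  Submodule.mkQ_surjective _

lemma resQ_mkC (J : Finset (Fin n)) (v : ↥(Finset.univ : Finset (Fin n)) → ℝ) :
    resQ J (mkC _ v) = mkC J (resL J v) := by
  simp only [resQ, mkC, Submodule.mkQ_apply, Submodule.mapQ_apply]

lemma mkC_one_eq_zero (I : Finset (Fin n)) : mkC I (1 : ↥I → ℝ) = 0 := by
  simp only [mkC, Submodule.mkQ_apply]
  exact (Submodule.Quotient.mk_eq_zero _).mpr (Submodule.subset_span rfl)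

lemma aFun_mkC (i j : Fin n) (v : ↥(Finset.univ : Finset (Fin n)) → ℝ) :
    aFun i j (mkC _ v) = v ⟨i, Finset.mem_univ i⟩ - v ⟨j, Finset.mem_univ j⟩ := by
  simp only [aFun, mkC, Submodule.mkQ_apply, Submodule.liftQ_apply, LinearMap.sub_apply,
    LinearMap.proj_apply, Function.eval]

lemma bFun_mkC (I : Finset (Fin n)) (i' j' : ↥I) (g : ↥I → ℝ) :
    bFun I i' j' (mkC I g) = g i' - g j' := by
  simp only [bFun, mkC, Submodule.mkQ_apply, Submodule.liftQ_apply, LinearMap.sub_apply,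
    LinearMap.proj_apply, Function.eval]

lemma resQ_univ (z : Apt n) : resQ Finset.univ z = z := by
  obtain ⟨v, rfl⟩ := mkC_surjective _ z
  rw [resQ_mkC]
  rfl

def lift0 (I : Finset (Fin n)) (g : ↥I → ℝ) : ↥(Finset.univ : Finset (Fin n)) → ℝ :=
  fun l => if h : (l : Fin n) ∈ I then g ⟨l, h⟩ else 0

lemma resL_lift0 (I : Finset (Fin n)) (g : ↥I → ℝ) : resL I (lift0 I g) = g := by
  funext l
  simp only [resL, LinearMap.funLeft_apply, lift0]
  rw [dif_pos l.2]

def curveFn (w : ↥(Finset.univ : Finset (Fin n)) → ℝ) (I : Finset (Fin n)) (t : ℝ) :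
    ↥(Finset.univ : Finset (Fin n)) → ℝ :=
  fun l => w l - if (l : Fin n) ∈ I then 0 else t

def gens (n : ℕ) [NeZero n] : Set (Set (CApt n)) :=
  {s | ∃ U : Set (Apt n), IsOpen U ∧ s = emb '' U} ∪
  {s | ∃ (U : Set (Apt n)) (I : Finset (Fin n)), I.Nonempty ∧ I ≠ Finset.univ ∧
      IsOpen U ∧ BoundedA U ∧ s = CUI U I}

lemma isOpen_iff_gen {O : Set (CApt n)} :
    IsOpen O ↔ TopologicalSpace.GenerateOpen (gens n) O := Iff.rfl

lemma emb_injective : Function.Injective (emb : Apt n → CApt n) := by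
  intro a b h
  exact eq_of_heq (Sigma.mk.inj_iff.mp h).2

end AuxProof
section AuxProof2

variable {n : ℕ} [NeZero n]

lemma curve_eventually_mem (I : Finset (Fin n)) (hI : I.Nonempty) (hIu : I ≠ Finset.univ)
    (w : ↥(Finset.univ : Finset (Fin n)) → ℝ) (y : Comp I) (hw : resQ I (mkC _ w) = y) :
    ∀ O : Set (CApt n), IsOpen O → embC I hI y ∈ O →
      ∃ t₀ : ℝ, ∀ t, t₀ ≤ t → emb (mkC _ (curveFn w I t)) ∈ O := by
  intro O hO
  rw [isOpen_iff_gen] at hO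
  induction hO with
  | basic O hOg =>
    intro hxO
    rcases hOg with ⟨U, hUo, rfl⟩ | ⟨U, I', hI', hI'u, hUo, hUb, rfl⟩
    · obtain ⟨z, _, he⟩ := hxO
      exact absurd (congrArg (fun p => p.1.1) he).symm hIu
    · obtain ⟨hsub, w', hw'mem, hw'res⟩ := hxO
      obtain ⟨w'r, rfl⟩ := mkC_surjective _ w'
      replace hsub : I' ⊆ I := hsub
      replace hw'res : resQ I (mkC _ w'r) = y := hw'res
      have hspan : resL I w'r - resL I w ∈ Submodule.span ℝ {(1 : ↥I → ℝ)} := by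
        have h2 : mkC I (resL I w'r) = mkC I (resL I w) := by
          rw [← resQ_mkC, ← resQ_mkC, hw'res, hw]
        simpa only [mkC, Submodule.mkQ_apply, Submodule.Quotient.eq] using h2
      obtain ⟨c, hc⟩ := Submodule.mem_span_singleton.mp hspan
      have hcl : ∀ l : ↥(Finset.univ : Finset (Fin n)), ((l : Fin n) ∈ I) → w'r l - w l = c := by
        intro l hl
        have h3 := congrFun hc ⟨(l : Fin n), hl⟩
        simpa only [resL, LinearMap.funLeft_apply, Pi.sub_apply, Pi.smul_apply, Pi.one_apply,
          smul_eq_mul, mul_one] using h3.symm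
      obtain ⟨u, hu, d, hd, hsum⟩ := Set.mem_add.mp hw'mem
      obtain ⟨dr, ⟨hd0, hdneg⟩, rfl⟩ := hd
      set χt : ℝ → (↥(Finset.univ : Finset (Fin n)) → ℝ) :=
        fun t l => if (l : Fin n) ∈ I then 0 else t with hχ
      set N : ↥(Finset.univ : Finset (Fin n)) → ℝ := dr + (w - w'r) + c • 1 with hN
      refine ⟨‖N‖, fun t ht => ?_⟩
      refine ⟨Finset.subset_univ _, mkC _ (curveFn w I t), ?_, resQ_univ _⟩
      refine Set.mem_add.mpr ⟨u, hu, mkC _ (N - χt t), ⟨N - χt t, ⟨?_, ?_⟩, rfl⟩, ?_⟩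
      · -- zero on I'
        intro l hl
        have hlI : (l : Fin n) ∈ I := hsub hl
        have := hcl l hlI
        simp only [hN, hχ, Pi.sub_apply, Pi.add_apply, Pi.smul_apply, Pi.one_apply, smul_eq_mul,
          mul_one, if_pos hlI, hd0 l hl]
        linarith
      · -- nonpositive off I'
        intro l hl
        by_cases hlI : (l : Fin n) ∈ I
        · have := hcl l hlI
          have hdl := hdneg l hl
          simp only [hN, hχ, Pi.sub_apply, Pi.add_apply, Pi.smul_apply, Pi.one_apply, smul_eq_mul,
            mul_one, if_pos hlI]
          linarith
        · have hNl : N l ≤ ‖N‖ := le_trans (le_abs_self _) (norm_le_pi_norm N l)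
          simp only [hχ, Pi.sub_apply, if_neg hlI]
          linarith
      · -- sum identity
        have hNmk : mkC (Finset.univ : Finset (Fin n)) (N - χt t) =
            mkC _ dr + mkC _ w - mkC _ w'r - mkC _ (χt t) := by
          simp only [hN, map_sub, map_add, map_smul, mkC_one_eq_zero, smul_zero]
          abel
        have hcur : mkC (Finset.univ : Finset (Fin n)) (curveFn w I t) =
            mkC _ w - mkC _ (χt t) := by
          have : curveFn w I t = w - χt t := rfl
          rw [this, map_sub]
        rw [hNmk, hcur, ← hsum]
        abel
  | univ => exact fun _ => ⟨0, fun t _ => trivial⟩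
  | inter O₁ O₂ h₁ h₂ ih₁ ih₂ =>
    intro hxO
    obtain ⟨t₁, H₁⟩ := ih₁ hxO.1
    obtain ⟨t₂, H₂⟩ := ih₂ hxO.2
    exact ⟨max t₁ t₂, fun t ht =>
      ⟨H₁ t (le_trans (le_max_left _ _) ht), H₂ t (le_trans (le_max_right _ _) ht)⟩⟩
  | sUnion S hS ih =>
    intro hxO
    obtain ⟨O, hOS, hxO'⟩ := hxO
    obtain ⟨t₀, H⟩ := ih O hOS hxO'
    exact ⟨t₀, fun t ht => ⟨O, hOS, H t ht⟩⟩

end AuxProof2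
section AuxProof3

variable {n : ℕ} [NeZero n]

lemma mem_halfCl (I : Finset (Fin n)) (hI : I.Nonempty) (y : Comp I)
    {i j : Fin n} (hiI : i ∈ I) (hjI : j ∈ I) (s' : ℝ)
    (h : s' ≤ bFun I ⟨i, hiI⟩ ⟨j, hjI⟩ y) : embC I hI y ∈ halfCl i j s' := by
  obtain ⟨g, rfl⟩ := mkC_surjective I y
  rw [bFun_mkC] at h
  by_cases hIu : I = Finset.univ
  · subst hIu
    apply subset_closure
    refine ⟨mkC _ g, ?_, rfl⟩
    rw [Set.mem_setOf_eq, aFun_mkC]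
    exact h
  · rw [halfCl, mem_closure_iff]
    intro O hO hxO
    have hw : resQ I (mkC _ (lift0 I g)) = mkC I g := by rw [resQ_mkC, resL_lift0]
    obtain ⟨t₀, H⟩ := curve_eventually_mem I hI hIu (lift0 I g) (mkC I g) hw O hO hxO
    refine ⟨emb (mkC _ (curveFn (lift0 I g) I t₀)), H t₀ le_rfl,
      mkC _ (curveFn (lift0 I g) I t₀), ?_, rfl⟩
    rw [Set.mem_setOf_eq, aFun_mkC]
    simpa only [curveFn, lift0, hiI, hjI, if_pos, dif_pos, sub_zero] using h

lemma notMem_halfCl_CUI (i j : Fin n) (I : Finset (Fin n)) (hI : I.Nonempty)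
    (hIu : I ≠ Finset.univ) (y : Comp I) (U : Set (Apt n)) (hUo : IsOpen U) (hUb : BoundedA U)
    (hx : embC I hI y ∈ CUI U I) (s' : ℝ)
    (hbd : ∀ z : Apt n, z ∈ U + cone I → aFun i j z < s') :
    embC I hI y ∉ halfCl i j s' := by
  intro hcl
  have hOopen : IsOpen (CUI U I) := isOpen_iff_gen.mpr
    (TopologicalSpace.GenerateOpen.basic _ (Or.inr ⟨U, I, hI, hIu, hUo, hUb, rfl⟩))
  obtain ⟨p, hpO, z, hz, rfl⟩ := mem_closure_iff.mp hcl _ hOopen hx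
  obtain ⟨z', hz'mem, hz'res⟩ := hpO.2
  replace hz'res : resQ Finset.univ z' = z := hz'res
  rw [resQ_univ] at hz'res
  rw [Set.mem_setOf_eq] at hz
  exact absurd hz (not_le.mpr (hbd z (hz'res ▸ hz'mem)))

lemma notMem_halfCl_left {i j : Fin n} (I : Finset (Fin n)) (hI : I.Nonempty)
    (hiI : i ∉ I) (hjI : j ∈ I) (y : Comp I) (s' : ℝ) :
    embC I hI y ∉ halfCl i j s' := by
  obtain ⟨g, rfl⟩ := mkC_surjective I y
  have hIu : I ≠ Finset.univ := fun h => hiI (h ▸ Finset.mem_univ i)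
  have hji : j ≠ i := fun h => hiI (h ▸ hjI)
  set w : ↥(Finset.univ : Finset (Fin n)) → ℝ := lift0 I g with hwdef
  set iU : ↥(Finset.univ : Finset (Fin n)) := ⟨i, Finset.mem_univ i⟩ with hiU
  set jU : ↥(Finset.univ : Finset (Fin n)) := ⟨j, Finset.mem_univ j⟩ with hjU
  set T : ℝ := w iU - w jU + 3 - s' with hT
  set wT : ↥(Finset.univ : Finset (Fin n)) → ℝ :=
    fun l => w l - if (l : Fin n) = i then T else 0 with hwT
  set U : Set (Apt n) := mkC _ '' Metric.ball wT 1 with hU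
  have hUo : IsOpen U := Submodule.isOpenMap_mkQ _ _ Metric.isOpen_ball
  have hUb : BoundedA U := ⟨Metric.ball wT 1, Metric.isBounded_ball, le_refl _⟩
  have hres : resQ I (mkC _ wT) = mkC I g := by
    rw [resQ_mkC]
    congr 1
    funext l
    have hli : (l : Fin n) ≠ i := fun h => hiI (h ▸ l.2)
    simp only [resL, LinearMap.funLeft_apply, hwT, hwdef, lift0, if_neg hli, sub_zero,
      dif_pos l.2]
  have hxmem : embC I hI (mkC I g) ∈ CUI U I := by
    refine ⟨Finset.Subset.refl I, mkC _ wT, ?_, hres⟩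
    exact Set.mem_add.mpr ⟨mkC _ wT, ⟨wT, Metric.mem_ball_self one_pos, rfl⟩, 0,
      ⟨0, ⟨fun l _ => rfl, fun l _ => le_rfl⟩, map_zero _⟩, add_zero _⟩
  refine notMem_halfCl_CUI i j I hI hIu _ U hUo hUb hxmem s' ?_
  intro z hz
  obtain ⟨u', hu', d, hd, rfl⟩ := Set.mem_add.mp hz
  obtain ⟨ur, hur, rfl⟩ := hu'
  obtain ⟨dr, ⟨hd0, hdneg⟩, rfl⟩ := hd
  rw [map_add, aFun_mkC, aFun_mkC]
  have hbi : |ur iU - wT iU| < 1 := by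
    have h1 := dist_le_pi_dist ur wT iU
    rw [Metric.mem_ball] at hur
    rw [Real.dist_eq] at h1
    linarith
  have hbj : |ur jU - wT jU| < 1 := by
    have h1 := dist_le_pi_dist ur wT jU
    rw [Metric.mem_ball] at hur
    rw [Real.dist_eq] at h1
    linarith
  have hwTi : wT iU = w iU - T := by simp [hwT, hiU]
  have hwTj : wT jU = w jU := by simp [hwT, hji, hjU]
  have hdi : dr iU ≤ 0 := hdneg iU hiI
  have hdj : dr jU = 0 := hd0 jU hjI
  rw [abs_lt] at hbi hbj
  have : ur iU - ur jU < wT iU - wT jU + 2 := by linarith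
  rw [hwTi, hwTj] at this
  rw [hdj]
  rw [hT] at this
  linarith

lemma notMem_halfCl_both (I : Finset (Fin n)) (hI : I.Nonempty)
    {i j : Fin n} (hiI : i ∈ I) (hjI : j ∈ I) (y : Comp I) (s' : ℝ)
    (hb : bFun I ⟨i, hiI⟩ ⟨j, hjI⟩ y < s') :
    embC I hI y ∉ halfCl i j s' := by
  obtain ⟨g, rfl⟩ := mkC_surjective I y
  rw [bFun_mkC] at hb
  by_cases hIu : I = Finset.univ
  · subst hIu
    intro hcl
    have hUo : IsOpen {z : Apt n | aFun i j z < s'} := by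
      refine (Submodule.isOpenQuotientMap_mkQ _).isQuotientMap.isOpen_preimage.mp ?_
      have hpre : (Submodule.mkQ (Submodule.span ℝ
            {(1 : ↥(Finset.univ : Finset (Fin n)) → ℝ)})) ⁻¹' {z : Apt n | aFun i j z < s'} =
          {v : ↥(Finset.univ : Finset (Fin n)) → ℝ |
            v ⟨i, Finset.mem_univ i⟩ - v ⟨j, Finset.mem_univ j⟩ < s'} := by
        ext v
        rw [Set.mem_preimage, Set.mem_setOf_eq, Set.mem_setOf_eq]
        rw [show Submodule.mkQ _ v = mkC _ v from rfl, aFun_mkC]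
      rw [hpre]
      have hcont : Continuous fun v : ↥(Finset.univ : Finset (Fin n)) → ℝ =>
          v ⟨i, Finset.mem_univ i⟩ - v ⟨j, Finset.mem_univ j⟩ :=
        (continuous_apply _).sub (continuous_apply _)
      exact isOpen_lt hcont continuous_const
    have hOopen : IsOpen (emb '' {z : Apt n | aFun i j z < s'}) :=
      isOpen_iff_gen.mpr (.basic _ (Or.inl ⟨_, hUo, rfl⟩))
    have hxO : embC Finset.univ hI (mkC _ g) ∈ emb '' {z : Apt n | aFun i j z < s'} := by
      refine ⟨mkC _ g, ?_, rfl⟩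
      rw [Set.mem_setOf_eq, aFun_mkC]
      exact hb
    obtain ⟨p, hpO, z, hz, rfl⟩ := mem_closure_iff.mp hcl _ hOopen hxO
    obtain ⟨z₂, hz₂, he⟩ := hpO
    rw [emb_injective he] at hz₂
    rw [Set.mem_setOf_eq] at hz hz₂
    linarith
  · set iU : ↥(Finset.univ : Finset (Fin n)) := ⟨i, Finset.mem_univ i⟩ with hiU
    set jU : ↥(Finset.univ : Finset (Fin n)) := ⟨j, Finset.mem_univ j⟩ with hjU
    set w : ↥(Finset.univ : Finset (Fin n)) → ℝ := lift0 I g with hwdef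
    set δ : ℝ := (s' - (w iU - w jU)) / 3 with hδ
    have hwi : w iU = g ⟨i, hiI⟩ := by simp [hwdef, lift0, hiI, hiU]
    have hwj : w jU = g ⟨j, hjI⟩ := by simp [hwdef, lift0, hjI, hjU]
    have hδpos : 0 < δ := by rw [hδ, hwi, hwj]; linarith
    set U : Set (Apt n) := mkC _ '' Metric.ball w δ with hU
    have hUo : IsOpen U := Submodule.isOpenMap_mkQ _ _ Metric.isOpen_ball
    have hUb : BoundedA U := ⟨Metric.ball w δ, Metric.isBounded_ball, le_refl _⟩
    have hres : resQ I (mkC _ w) = mkC I g := by rw [resQ_mkC, hwdef, resL_lift0]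
    have hxmem : embC I hI (mkC I g) ∈ CUI U I := by
      refine ⟨Finset.Subset.refl I, mkC _ w, ?_, hres⟩
      exact Set.mem_add.mpr ⟨mkC _ w, ⟨w, Metric.mem_ball_self hδpos, rfl⟩, 0,
        ⟨0, ⟨fun l _ => rfl, fun l _ => le_rfl⟩, map_zero _⟩, add_zero _⟩
    refine notMem_halfCl_CUI i j I hI hIu _ U hUo hUb hxmem s' ?_
    intro z hz
    obtain ⟨u', hu', d, hd, rfl⟩ := Set.mem_add.mp hz
    obtain ⟨ur, hur, rfl⟩ := hu'
    obtain ⟨dr, ⟨hd0, hdneg⟩, rfl⟩ := hd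
    rw [map_add, aFun_mkC, aFun_mkC]
    have hbi : |ur iU - w iU| < δ := by
      have h1 := dist_le_pi_dist ur w iU
      rw [Metric.mem_ball] at hur
      rw [Real.dist_eq] at h1
      linarith
    have hbj : |ur jU - w jU| < δ := by
      have h1 := dist_le_pi_dist ur w jU
      rw [Metric.mem_ball] at hur
      rw [Real.dist_eq] at h1
      linarith
    have hdi : dr iU = 0 := hd0 iU hiI
    have hdj : dr jU = 0 := hd0 jU hjI
    rw [abs_lt] at hbi hbj
    rw [hdi, hdj]
    rw [hwi, hwj] at hδ
    linarith [hδ]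

end AuxProof3
section AuxProof4

variable {n : ℕ} [NeZero n]

lemma fO_top {i j : Fin n} (I : Finset (Fin n)) (hI : I.Nonempty) (y : Comp I)
    (hiI : i ∉ I) (hjI : j ∈ I) : fO {embC I hI y} i j = ⊤ := by
  rw [fO]
  convert sInf_empty
  · rfl
  rw [Set.eq_empty_iff_forall_notMem]
  rintro t ⟨s, rfl, hsub⟩
  exact notMem_halfCl_left I hI hiI hjI y (-s) (hsub (Set.mem_singleton _))

lemma fO_both {i j : Fin n} (I : Finset (Fin n)) (hI : I.Nonempty) (y : Comp I)
    (hiI : i ∈ I) (hjI : j ∈ I) :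
    fO {embC I hI y} i j = ((-(bFun I ⟨i, hiI⟩ ⟨j, hjI⟩ y) : ℝ) : EReal) := by
  apply le_antisymm
  · apply sInf_le
    refine ⟨-(bFun I ⟨i, hiI⟩ ⟨j, hjI⟩ y), rfl, ?_⟩
    rw [Set.singleton_subset_iff, neg_neg]
    exact mem_halfCl I hI y hiI hjI _ le_rfl
  · apply le_sInf
    rintro t ⟨s, rfl, hsub⟩
    rw [EReal.coe_le_coe_iff]
    by_contra hlt
    push_neg at hlt
    refine notMem_halfCl_both I hI hiI hjI y (-s) (by linarith) (hsub (Set.mem_singleton _))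

lemma elemMat_mulVec {K : Type*} [Field K] {m : ℕ} (i j : Fin m) (ω : K) (u : Fin m → K)
    (l : Fin m) :
    Matrix.mulVec (elemMat i j ω) u l = u l + (if l = i then ω * u j else 0) := by
  rw [elemMat, Matrix.add_mulVec, Matrix.one_mulVec, Matrix.smul_mulVec]
  simp only [Pi.add_apply, Pi.smul_apply, smul_eq_mul]
  congr 1
  by_cases h : l = i
  · subst h
    simp [Matrix.mulVec, dotProduct, Matrix.single, ite_and, Finset.sum_ite_eq]
  · simp [Matrix.mulVec, dotProduct, Matrix.single, ite_and, h]
    exact fun hh => absurd hh.symm h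

end AuxProof4
/-- Let `x ∈ Λ_I ⊂ Λ̄` and `a = a_{ij}`.  Every element of
`U_{a,x} = { u ∈ U_a : ψ_a(u) ≥ f_x(a) }` leaves the subspace
`V_I = span{v_i : i ∈ I}` invariant.  Moreover, if `i` and `j` are not both in
`I` then `ρ_I(U_{a,x}) = 1` (the restriction to `V_I` is the identity), while if
`i, j ∈ I` and `a` is induced by the root `b` of `T_I`, then `ρ_I` restricts to
a group isomorphism `U_{a,x} → U^I_{b,x}`: the filtration conditions agree
(`f_x(a) = −b(x)`) and the restriction of `1 + ω E_{ij}` to `V_I` is the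
corresponding elementary unipotent transformation of `V_I` with entry `ω`. -/
theorem rootGroup_preserves_subspace {K : Type*} [Field K]
    (v : K → EReal) (hv0 : ∀ ω : K, v ω = ⊤ ↔ ω = 0)
    (hvdisc : ∀ ω : K, ω ≠ 0 → ∃ m : ℤ, v ω = ((m : ℝ) : EReal))
    {n : ℕ} [NeZero n] (i j : Fin n) (hij : i ≠ j)
    (I : Finset (Fin n)) (hI : I.Nonempty) (y : Comp I) :
    (∀ ω : K, fO {embC I hI y} i j ≤ v ω →
      ∀ u : Fin n → K, (∀ l, l ∉ I → u l = 0) →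
        ∀ l, l ∉ I → Matrix.mulVec (elemMat i j ω) u l = 0) ∧
    ((i ∉ I ∨ j ∉ I) → ∀ ω : K, fO {embC I hI y} i j ≤ v ω →
      ∀ u : Fin n → K, (∀ l, l ∉ I → u l = 0) →
        Matrix.mulVec (elemMat i j ω) u = u) ∧
    (∀ (hiI : i ∈ I) (hjI : j ∈ I),
      (∀ ω : K, fO {embC I hI y} i j ≤ v ω ↔
          ((-(bFun I ⟨i, hiI⟩ ⟨j, hjI⟩ y) : ℝ) : EReal) ≤ v ω) ∧
      (∀ ω : K, ∀ u : Fin n → K, (∀ l, l ∉ I → u l = 0) →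
          ∀ l, Matrix.mulVec (elemMat i j ω) u l =
            u l + (if l = i then ω * u j else 0))) := by
  have hmv := fun (ω : K) (u : Fin n → K) (l : Fin n) => elemMat_mulVec i j ω u l
  refine ⟨?_, ?_, ?_⟩
  · -- preserves the subspace
    intro ω hω u hu l hl
    rw [hmv, hu l hl, zero_add]
    split_ifs with h
    · subst h
      by_cases hj : j ∈ I
      · rw [fO_top I hI y hl hj, top_le_iff] at hω
        rw [(hv0 ω).mp hω, zero_mul]
      · rw [hu j hj, mul_zero]
    · rfl
  · -- restriction is the identity
    intro hcase ω hω u hu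
    funext l
    rw [hmv]
    split_ifs with h
    · subst h
      rw [add_eq_left]
      by_cases hj : j ∈ I
      · have hi : l ∉ I := hcase.resolve_right (fun hh => hh hj)
        rw [fO_top I hI y hi hj, top_le_iff] at hω
        rw [(hv0 ω).mp hω, zero_mul]
      · rw [hu j hj, mul_zero]
    · rw [add_zero]
  · -- both indices in I
    intro hiI hjI
    constructor
    · intro ω
      rw [fO_both I hI y hiI hjI]
    · intro ω u hu l
      exact hmv ω u l

end CompApp
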